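/- Let X be a finite T₀-space and let A be a subspace of X. Then A is a dbp–retract of X if and only if there exists a continuous function f : X → X such that f ≤ Id_X, f ∘ f = f and f(X) = A. -/

import Mathlib

open unitInterval

set_option autoImplicit false

universe u v

/-- The specialization preorder: `x ≤ y` iff every open set containing `y` contains `x`. -/
def specLE {X : Type*} [TopologicalSpace X] (x y : X) : Prop :=
  ∀ U : Set X, IsOpen U → y ∈ U → x ∈ U

/-- A continuous map `i : A → X` is a (Hurewicz) cofibration iff it has the homotopy
extension property with respect to all topological spaces. -/
def IsCofibration {A : Type*} {X : Type*} [TopologicalSpace A] [TopologicalSpace X]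
    (i : C(A, X)) : Prop :=
  ∀ (Z : Type v) [TopologicalSpace Z] (f : C(X, Z)) (H : C(A × I, Z)),
    (∀ a, H (a, 0) = f (i a)) →
    ∃ G : C(X × I, Z),
      (∀ x, G (x, 0) = f x) ∧ ∀ a t, G (i a, t) = H (a, t)

/-- `x` is a down beat point of the subspace `S`:
the set of points of `S` strictly below `x` has a maximum. -/
def IsDownBeatPoint {X : Type*} [TopologicalSpace X] (S : Set X) (x : X) : Prop :=
  x ∈ S ∧ ∃ m ∈ S, m ≠ x ∧ specLE m x ∧
    ∀ z ∈ S, z ≠ x → specLE z x → specLE z m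

/-- `T` is a dbp–retract of `S`: `T` is obtained from `S` by successively
removing down beat points. -/
inductive IsDbpRetract {X : Type*} [TopologicalSpace X] : Set X → Set X → Prop
  | refl (S : Set X) : IsDbpRetract S S
  | step {S T : Set X} (x : X) (hx : IsDownBeatPoint S x)
      (h : IsDbpRetract (S \ {x}) T) : IsDbpRetract S T

/-- The minimal open set containing `x` (in a finite space): the intersection of all
open sets containing `x`. -/
def minOpen {X : Type*} [TopologicalSpace X] (x : X) : Set X :=
  ⋂₀ {U : Set X | IsOpen U ∧ x ∈ U}

/-!
A down beat point `x` of `S`, with `m` the maximum of the points below it, is removed by the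
retraction sending `x` to `m` and fixing everything else; this map is monotone for the
specialization order and lies below the identity. Composing these retractions gives the required
idempotent map. Conversely, given such an `f`, a point `x` outside `f(X)` that is minimal among
such points is a down beat point: every `z < x` lies in `f(X)`, so `z = f z ≤ f x < x`.
Removing `x` and repeating yields `f(X)`.
-/

open Set

variable {X : Type*} [TopologicalSpace X]

theorem specLE_iff_specializes {x y : X} : specLE x y ↔ x ⤳ y :=
  specializes_iff_forall_open.symm

theorem continuous_of_forall_specializes {Y : Type*} [TopologicalSpace Y] [AlexandrovDiscrete X]
    {f : X → Y} (hf : ∀ ⦃x y⦄, x ⤳ y → f x ⤳ f y) : Continuous f :=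
  continuous_def.2 fun _ hU => isOpen_iff_forall_specializes.2 fun _ _ hxy hy =>
    (hf hxy).mem_open hU hy

theorem Set.Finite.exists_mem_forall_specializes_eq [T0Space X] {s : Set X} (hs : s.Finite)
    (hne : s.Nonempty) : ∃ x ∈ s, ∀ y ∈ s, y ⤳ x → y = x := by
  let := specializationOrder X
  obtain ⟨x, hx⟩ := hs.exists_maximal hne
  exact ⟨x, hx.prop, fun y hy hyx => hx.eq_of_ge hy hyx⟩

structure IsLowerRetraction (g : X → X) (S T : Set X) : Prop where
  subset : T ⊆ S
  mapsTo : MapsTo g S T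
  eq_of_mem : ∀ x ∈ T, g x = x
  specializes : ∀ x ∈ S, g x ⤳ x
  monotoneOn : ∀ ⦃x⦄, x ∈ S → ∀ ⦃y⦄, y ∈ S → x ⤳ y → g x ⤳ g y

namespace IsLowerRetraction

variable {g r : X → X} {S S' T : Set X}

theorem id (S : Set X) : IsLowerRetraction id S S :=
  ⟨subset_rfl, mapsTo_id S, fun _ _ => rfl, fun _ _ => specializes_rfl, fun _ _ _ _ h => h⟩

theorem comp (hr : IsLowerRetraction r S S') (hg : IsLowerRetraction g S' T) :
    IsLowerRetraction (g ∘ r) S T where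
  subset := hg.subset.trans hr.subset
  mapsTo := hg.mapsTo.comp hr.mapsTo
  eq_of_mem x hx := by
    rw [Function.comp_apply, hr.eq_of_mem x (hg.subset hx), hg.eq_of_mem x hx]
  specializes x hx := (hg.specializes _ (hr.mapsTo hx)).trans (hr.specializes x hx)
  monotoneOn _ hx _ hy hxy := hg.monotoneOn (hr.mapsTo hx) (hr.mapsTo hy) (hr.monotoneOn hx hy hxy)

theorem restrict (hg : IsLowerRetraction g S T) (hS' : S' ⊆ S) (hT : T ⊆ S') :
    IsLowerRetraction g S' T where
  subset := hT
  mapsTo := hg.mapsTo.mono_left hS'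
  eq_of_mem := hg.eq_of_mem
  specializes x hx := hg.specializes x (hS' hx)
  monotoneOn _ hx _ hy := hg.monotoneOn (hS' hx) (hS' hy)

theorem image_eq (hg : IsLowerRetraction g S T) : g '' S = T :=
  (hg.mapsTo.image_subset).antisymm fun x hx => ⟨x, hg.subset hx, hg.eq_of_mem x hx⟩

end IsLowerRetraction

theorem IsDownBeatPoint.exists_isLowerRetraction {S : Set X} {x : X} (hx : IsDownBeatPoint S x) :
    ∃ r, IsLowerRetraction r S (S \ {x}) := by
  classical
  obtain ⟨-, m, hmS, hmx, hm, hmax⟩ := hx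
  simp only [specLE_iff_specializes] at hm hmax
  have hr_ne {z : X} (hz : z ≠ x) : Function.update id x m z = z := Function.update_of_ne hz _ _
  refine ⟨Function.update id x m, sdiff_subset, fun z hz => ?_, fun z hz => hr_ne hz.2,
    fun z _ => ?_, fun z hz y hy hzy => ?_⟩
  · rcases eq_or_ne z x with rfl | hzx
    · simpa using ⟨hmS, hmx⟩
    · rw [hr_ne hzx]; exact ⟨hz, hzx⟩
  · rcases eq_or_ne z x with rfl | hzx
    · simpa using hm
    · rw [hr_ne hzx]
  · by_cases hzx : z = x <;> by_cases hyx : y = x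
    · rw [hzx, hyx]
    · subst hzx
      rw [Function.update_self, hr_ne hyx]
      exact hm.trans hzy
    · subst hyx
      rw [hr_ne hzx, Function.update_self]
      exact hmax z hz hzx hzy
    · rw [hr_ne hzx, hr_ne hyx]
      exact hzy

theorem IsLowerRetraction.isDbpRetract [Finite X] [T0Space X] {g : X → X} {S T : Set X}
    (hg : IsLowerRetraction g S T) : IsDbpRetract S T := by
  induction S using WellFoundedLT.induction with
  | _ S ih =>
  by_cases hST : S ⊆ T
  · obtain rfl := hST.antisymm hg.subset
    exact .refl S
  obtain ⟨x, ⟨hxS, hxT⟩, hmin⟩ :=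
    (toFinite (S \ T)).exists_mem_forall_specializes_eq (sdiff_nonempty.2 hST)
  have hbelow : ∀ z ∈ S, z ≠ x → z ⤳ x → z ∈ T := fun z hz hne hzx =>
    by_contra fun hzT => hne (hmin z ⟨hz, hzT⟩ hzx)
  have hbeat : IsDownBeatPoint S x := by
    refine ⟨hxS, g x, hg.subset (hg.mapsTo hxS), fun h => hxT (h ▸ hg.mapsTo hxS),
      specLE_iff_specializes.2 (hg.specializes x hxS), fun z hz hne hzx => ?_⟩
    rw [specLE_iff_specializes] at hzx ⊢
    rw [← hg.eq_of_mem z (hbelow z hz hne hzx)]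
    exact hg.monotoneOn hz hxS hzx
  exact .step x hbeat (ih _ (sdiff_singleton_ssubset.2 hxS)
    (hg.restrict sdiff_subset fun z hz => ⟨hg.subset hz, fun h => hxT (h ▸ hz)⟩))

theorem IsDbpRetract.exists_isLowerRetraction {S T : Set X} (h : IsDbpRetract S T) :
    ∃ g, IsLowerRetraction g S T := by
  induction h with
  | refl S => exact ⟨id, .id S⟩
  | step x hx _ ih =>
    obtain ⟨r, hr⟩ := hx.exists_isLowerRetraction
    obtain ⟨g, hg⟩ := ih
    exact ⟨g ∘ r, hr.comp hg⟩

/-- Let `X` be a finite T₀-space and `A ⊆ X`. Then `A` is a dbp–retract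
of `X` iff there is a continuous `f : X → X` with `f ≤ Id_X`, `f ∘ f = f` and `f(X) = A`. -/
theorem dbpRetract_iff_exists_idempotent_le_id
    {X : Type u} [TopologicalSpace X] [Finite X] [T0Space X] (A : Set X) :
    IsDbpRetract (Set.univ : Set X) A ↔
      ∃ f : C(X, X), (∀ x, specLE (f x) x) ∧ (∀ x, f (f x) = f x) ∧ Set.range f = A := by
  simp only [specLE_iff_specializes]
  constructor
  · intro h
    obtain ⟨g, hg⟩ := h.exists_isLowerRetraction
    refine ⟨⟨g, continuous_of_forall_specializes fun x y => hg.monotoneOn trivial trivial⟩,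
      fun x => hg.specializes x trivial, fun x => hg.eq_of_mem _ (hg.mapsTo trivial), ?_⟩
    exact image_univ.symm.trans hg.image_eq
  · rintro ⟨f, hle, hidem, rfl⟩
    refine IsLowerRetraction.isDbpRetract ⟨subset_univ _, fun x _ => mem_range_self x,
      ?_, fun x _ => hle x, fun _ _ _ _ hxy => hxy.map f.continuous⟩
    rintro _ ⟨x, rfl⟩
    exact hidem x
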